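/- Let ν ≥ 2 and let Ψ be a set of coverings with #Ψ ≥ 2. If the RVB polynomial F_Ψ = Σ_{ψ∈Ψ} F_ψ splits across a nontrivial bipartition (E,E') of Γ_{2ν}, then ψ(E∩A) = E∩B for every ψ ∈ Ψ (that is, Ψ is decomposable via E), and #E and #E' are both even. -/

import Mathlib

open MvPolynomial Finset

noncomputable section

/-- The odd-labelled site `2t−1` of the paper (`t`-th site of sublattice `A`),
zero-indexed as `2t` in `Fin (2ν)`. -/
def siteA (ν : ℕ) (t : Fin ν) : Fin (2 * ν) := ⟨2 * t.val, by have := t.isLt; omega⟩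

/-- The even-labelled site `2t` of the paper (`t`-th site of sublattice `B`),
zero-indexed as `2t+1` in `Fin (2ν)`. -/
def siteB (ν : ℕ) (t : Fin ν) : Fin (2 * ν) := ⟨2 * t.val + 1, by have := t.isLt; omega⟩

/-- A covering is a bijection `ψ : A → B`; it is encoded by the permutation
`σ` of `Fin ν` with `ψ(siteA t) = siteB (σ t)`.  Its covering polynomial is
`F_ψ = ∏_{a∈A} (X_{ψ(a)} − X_a)`. -/
def covPoly (ν : ℕ) (σ : Equiv.Perm (Fin ν)) : MvPolynomial (Fin (2 * ν)) ℂ :=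
  ∏ t : Fin ν, (X (siteB ν (σ t)) - X (siteA ν t))

/-- `F` splits across the bipartition `(E, Eᶜ)`. -/
def SplitsAcross {n : ℕ} (F : MvPolynomial (Fin n) ℂ) (E : Finset (Fin n)) : Prop :=
  ∃ p q : MvPolynomial (Fin n) ℂ, F = p * q ∧ p.vars ⊆ E ∧ q.vars ⊆ Eᶜ

/-- `ψ(E ∩ A) = E ∩ B` for the covering `ψ` encoded by `σ`
(here `E ∩ B` is the set of odd-indexed, i.e. `B`-sublattice, elements of `E`). -/
def MapsCut (ν : ℕ) (σ : Equiv.Perm (Fin ν)) (E : Finset (Fin (2 * ν))) : Prop :=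
  ((Finset.univ.filter (fun t => siteA ν t ∈ E)).image fun t => siteB ν (σ t))
    = E.filter (fun x => x.val % 2 = 1)


/-- The (unnormalized) RVB polynomial `F_Ψ = Σ_{ψ∈Ψ} F_ψ`. -/
def rvbPoly (ν : ℕ) (Ψ : Finset (Equiv.Perm (Fin ν))) : MvPolynomial (Fin (2 * ν)) ℂ :=
  ∑ σ ∈ Ψ, covPoly ν σ

/-!
If `F = p * q` with `p` in the variables of `E` and `q` in those of `E' = Eᶜ`, the coefficient of
`X^d` in `F` is `coeff (d|E) p * coeff (d|E') q`. So whenever `X^d₁` and `X^d₂` occur in `F`, so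
does `X^(d₁|E + d₂|E')`; since `F_Ψ` is homogeneous of degree `ν`, all its monomials then have the
same degree in the variables of `E`.

Fix `ψ ∈ Ψ`, an `A`-site `a` and let `M` be the product of the `X_{a'}` over the other `A`-sites.
Expanding `F_ψ' = ∏ (X_{ψ'(a')} - X_{a'})`, the monomial `X_a M` has coefficient `±#Ψ` in `F_Ψ`
and `X_{ψ(a)} M` has coefficient `±#{ψ' ∈ Ψ | ψ'(a) = ψ(a)}`, both nonzero. Comparing their
`E`-degrees shows that `a` and `ψ(a)` lie on the same side of the cut, which is `ψ(E ∩ A) = E ∩ B`,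
and then `#E = 2 #(E ∩ A)`.
-/

namespace MvPolynomial

variable {σ R : Type*} [CommSemiring R]

theorem coeff_mul_of_separated_vars [DecidableEq σ] {p q : MvPolynomial σ R} {P : σ → Prop}
    [DecidablePred P]
    (hp : ∀ i ∈ p.vars, P i) (hq : ∀ i ∈ q.vars, ¬P i) (d : σ →₀ ℕ) :
    coeff d (p * q) = coeff (d.filter P) p * coeff (d.filter (¬P ·)) q := by
  rw [coeff_mul]
  refine sum_eq_single (d.filter P, d.filter (¬P ·)) ?_ fun h ↦
    absurd (mem_antidiagonal.2 (Finsupp.filter_add_filter_not d P)) h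
  have hvars {r : MvPolynomial σ R} {u : σ →₀ ℕ} (hu : coeff u r ≠ 0) (i : σ) (hi : u i ≠ 0) :
      i ∈ r.vars :=
    (mem_vars_iff_mem_support i).2 ⟨u, mem_support_iff.2 hu, Finsupp.mem_support_iff.2 hi⟩
  rintro ⟨u, v⟩ huv hne
  by_contra h
  have hu i (hi : u i ≠ 0) : P i := hp i (hvars (left_ne_zero_of_mul h) i hi)
  have hv i (hi : v i ≠ 0) : ¬P i := hq i (hvars (right_ne_zero_of_mul h) i hi)
  obtain rfl := mem_antidiagonal.1 huv
  apply hne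
  dsimp only
  rw [Finsupp.filter_add, Finsupp.filter_add, (Finsupp.filter_eq_self_iff _ _).2 hu,
    (Finsupp.filter_eq_self_iff _ _).2 hv, (Finsupp.filter_eq_zero_iff _ _).2 fun i hi ↦ ?_,
    (Finsupp.filter_eq_zero_iff _ _).2 fun i hi ↦ ?_, add_zero, zero_add]
  · exact of_not_not fun h ↦ hi (hu i h)
  · exact of_not_not fun h ↦ hv i h hi

theorem coeff_single_add_X_mul [DecidableEq σ] {c c' : σ} {D : σ →₀ ℕ} (hD : D c' = 0)
    (p : MvPolynomial σ R) :
    coeff (Finsupp.single c 1 + D) (X c' * p) = if c' = c then coeff D p else 0 := by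
  split_ifs with h
  · rw [h, coeff_X_mul]
  · rw [coeff_X_mul', if_neg]
    simp [h, hD]

end MvPolynomial

theorem SplitsAcross.degree_filter_eq {n k : ℕ} {F : MvPolynomial (Fin n) ℂ}
    {E : Finset (Fin n)} (hsplit : SplitsAcross F E) (hF : F.IsHomogeneous k)
    {d₁ d₂ : Fin n →₀ ℕ} (h₁ : coeff d₁ F ≠ 0) (h₂ : coeff d₂ F ≠ 0) :
    (d₁.filter (· ∈ E)).degree = (d₂.filter (· ∈ E)).degree := by
  obtain ⟨p, q, rfl, hp, hq⟩ := hsplit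
  have hcoeff := coeff_mul_of_separated_vars (P := (· ∈ E)) (fun i hi ↦ hp hi)
    (fun i hi ↦ mem_compl.1 (hq hi))
  set m := d₁.filter (· ∈ E) + d₂.filter (· ∉ E)
  have hmE : m.filter (· ∈ E) = d₁.filter (· ∈ E) := by
    ext i; by_cases hi : i ∈ E <;> simp [m, hi]
  have hmE' : m.filter (· ∉ E) = d₂.filter (· ∉ E) := by
    ext i; by_cases hi : i ∈ E <;> simp [m, hi]
  have hm : coeff m (p * q) ≠ 0 := by
    rw [hcoeff] at h₁ h₂ ⊢
    rw [hmE, hmE']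
    exact mul_ne_zero (left_ne_zero_of_mul h₁) (right_ne_zero_of_mul h₂)
  have hdeg₂ : d₂.degree = k := of_not_not fun h ↦ h₂ (hF.coeff_eq_zero h)
  have hdegm : m.degree = k := of_not_not fun h ↦ hm (hF.coeff_eq_zero h)
  rw [← Finsupp.filter_add_filter_not d₂ (· ∈ E), map_add] at hdeg₂
  rw [map_add] at hdegm
  omega

theorem SplitsAcross.mem_iff_of_coeff_single_add_ne_zero {n k : ℕ} {F : MvPolynomial (Fin n) ℂ}
    {E : Finset (Fin n)} (hsplit : SplitsAcross F E) (hF : F.IsHomogeneous k)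
    {a b : Fin n} {D : Fin n →₀ ℕ} (ha : coeff (Finsupp.single a 1 + D) F ≠ 0)
    (hb : coeff (Finsupp.single b 1 + D) F ≠ 0) : a ∈ E ↔ b ∈ E := by
  have h := hsplit.degree_filter_eq hF ha hb
  by_cases haE : a ∈ E <;> by_cases hbE : b ∈ E <;>
    simp [Finsupp.filter_add, Finsupp.filter_single_of_pos, Finsupp.filter_single_of_neg,
      haE, hbE] at h ⊢

section Sites

variable {ν : ℕ}

theorem siteA_injective : Function.Injective (siteA ν) := fun s t h ↦
  Fin.ext (by simpa [siteA] using congrArg Fin.val h)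

theorem siteB_injective : Function.Injective (siteB ν) := fun s t h ↦
  Fin.ext (by simpa [siteB] using congrArg Fin.val h)

theorem siteA_ne_siteB (s t : Fin ν) : siteA ν s ≠ siteB ν t := fun h ↦ by
  have := congrArg Fin.val h
  simp only [siteA, siteB] at this
  omega

theorem exists_siteA_eq {x : Fin (2 * ν)} (hx : ¬x.val % 2 = 1) : ∃ t, siteA ν t = x :=
  ⟨⟨x.val / 2, by omega⟩, Fin.ext (by simp only [siteA]; omega)⟩

theorem exists_siteB_eq {x : Fin (2 * ν)} (hx : x.val % 2 = 1) : ∃ t, siteB ν t = x :=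
  ⟨⟨x.val / 2, by omega⟩, Fin.ext (by simp only [siteB]; omega)⟩

theorem filter_not_odd_eq_image_siteA (E : Finset (Fin (2 * ν))) :
    E.filter (fun x ↦ ¬x.val % 2 = 1) = (univ.filter fun t ↦ siteA ν t ∈ E).image (siteA ν) := by
  ext x
  simp only [mem_filter, mem_image, mem_univ, true_and]
  constructor
  · rintro ⟨hx, heven⟩
    obtain ⟨t, rfl⟩ := exists_siteA_eq heven
    exact ⟨t, hx, rfl⟩
  · rintro ⟨t, ht, rfl⟩
    exact ⟨ht, by simp [siteA]⟩

theorem filter_odd_eq_image_siteB (E : Finset (Fin (2 * ν))) :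
    E.filter (fun x ↦ x.val % 2 = 1) = (univ.filter fun t ↦ siteB ν t ∈ E).image (siteB ν) := by
  ext x
  simp only [mem_filter, mem_image, mem_univ, true_and]
  constructor
  · rintro ⟨hx, hodd⟩
    obtain ⟨t, rfl⟩ := exists_siteB_eq hodd
    exact ⟨t, hx, rfl⟩
  · rintro ⟨t, ht, rfl⟩
    exact ⟨ht, by simp [siteB]⟩

theorem card_eq_card_siteA_add_card_siteB (E : Finset (Fin (2 * ν))) :
    #E = #{t | siteA ν t ∈ E} + #{t | siteB ν t ∈ E} := by
  rw [← card_filter_add_card_filter_not (fun x : Fin (2 * ν) ↦ x.val % 2 = 1),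
    filter_odd_eq_image_siteB, filter_not_odd_eq_image_siteA,
    card_image_of_injective _ siteA_injective, card_image_of_injective _ siteB_injective, add_comm]

end Sites

section Coefficients

variable {ν : ℕ}

def siteAExponent (s : Finset (Fin ν)) : Fin (2 * ν) →₀ ℕ := ∑ t ∈ s, Finsupp.single (siteA ν t) 1

theorem siteAExponent_apply_siteB (s : Finset (Fin ν)) (u : Fin ν) :
    siteAExponent s (siteB ν u) = 0 := by
  simp [siteAExponent, siteA_ne_siteB]

theorem siteAExponent_apply_siteA_of_notMem {s : Finset (Fin ν)} {u : Fin ν} (hu : u ∉ s) :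
    siteAExponent s (siteA ν u) = 0 := by
  simp [siteAExponent, Finsupp.single_apply, siteA_injective.eq_iff, hu]

theorem coeff_siteAExponent_prod (τ : Equiv.Perm (Fin ν)) (s : Finset (Fin ν)) :
    coeff (siteAExponent s) (∏ t ∈ s, (X (siteB ν (τ t)) - X (siteA ν t)) : MvPolynomial _ ℂ) =
      (-1) ^ #s := by
  induction s using Finset.induction_on with
  | empty => simp [siteAExponent]
  | insert t s ht ih =>
    rw [prod_insert ht, siteAExponent, sum_insert ht, ← siteAExponent, sub_mul, coeff_sub,
      coeff_single_add_X_mul (siteAExponent_apply_siteB _ _), coeff_X_mul, ih,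
      card_insert_of_notMem ht, if_neg (siteA_ne_siteB _ _).symm, pow_succ]
    ring

theorem isHomogeneous_covPoly (τ : Equiv.Perm (Fin ν)) : (covPoly ν τ).IsHomogeneous ν := by
  simpa [covPoly] using IsHomogeneous.prod univ _ (fun _ ↦ 1) fun t _ ↦
    (isHomogeneous_X ℂ (siteB ν (τ t))).sub (isHomogeneous_X ℂ (siteA ν t))

theorem isHomogeneous_rvbPoly (Ψ : Finset (Equiv.Perm (Fin ν))) :
    (rvbPoly ν Ψ).IsHomogeneous ν :=
  IsHomogeneous.sum _ _ _ fun τ _ ↦ isHomogeneous_covPoly τ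

theorem coeff_single_add_siteAExponent_covPoly (τ : Equiv.Perm (Fin ν)) (t₀ : Fin ν)
    (c : Fin (2 * ν)) :
    coeff (Finsupp.single c 1 + siteAExponent (univ.erase t₀)) (covPoly ν τ) =
      ((if siteB ν (τ t₀) = c then 1 else 0) - if siteA ν t₀ = c then 1 else 0) *
        (-1) ^ (ν - 1) := by
  rw [covPoly, ← mul_prod_erase univ _ (mem_univ t₀), sub_mul, coeff_sub,
    coeff_single_add_X_mul (siteAExponent_apply_siteB _ _),
    coeff_single_add_X_mul (siteAExponent_apply_siteA_of_notMem (notMem_erase t₀ univ)),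
    coeff_siteAExponent_prod, card_erase_of_mem (mem_univ t₀), card_univ, Fintype.card_fin]
  split_ifs <;> ring

theorem siteA_mem_iff_siteB_mem_of_splitsAcross {Ψ : Finset (Equiv.Perm (Fin ν))}
    {E : Finset (Fin (2 * ν))} (hsplit : SplitsAcross (rvbPoly ν Ψ) E) {σ : Equiv.Perm (Fin ν)}
    (hσ : σ ∈ Ψ) (t : Fin ν) : siteA ν t ∈ E ↔ siteB ν (σ t) ∈ E := by
  refine hsplit.mem_iff_of_coeff_single_add_ne_zero (isHomogeneous_rvbPoly Ψ)
    (D := siteAExponent (univ.erase t)) ?_ ?_ <;>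
    simp only [rvbPoly, coeff_sum, coeff_single_add_siteAExponent_covPoly, siteA_ne_siteB,
      (siteA_ne_siteB _ _).symm, siteB_injective.eq_iff]
  · simpa using card_ne_zero_of_mem hσ
  · simp only [if_false, sub_zero, ← sum_mul, sum_boole]
    simpa using ⟨σ, hσ, rfl⟩

end Coefficients

section Cut

variable {ν : ℕ} {σ : Equiv.Perm (Fin ν)} {E : Finset (Fin (2 * ν))}

theorem mapsCut_of_forall_mem_iff (h : ∀ t, siteA ν t ∈ E ↔ siteB ν (σ t) ∈ E) :
    MapsCut ν σ E := by
  rw [MapsCut, filter_odd_eq_image_siteB]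
  ext x
  simp only [mem_image, mem_filter, mem_univ, true_and, h]
  constructor
  · rintro ⟨t, ht, rfl⟩
    exact ⟨σ t, ht, rfl⟩
  · rintro ⟨u, hu, rfl⟩
    exact ⟨σ.symm u, by simpa using hu, by simp⟩

theorem card_eq_two_mul_of_forall_mem_iff (h : ∀ t, siteA ν t ∈ E ↔ siteB ν (σ t) ∈ E) :
    #E = 2 * #{t | siteA ν t ∈ E} := by
  have hB : #{t | siteB ν t ∈ E} = #{t | siteA ν t ∈ E} := by
    simp_rw [h]
    exact (card_equiv σ (by simp)).symm
  rw [card_eq_card_siteA_add_card_siteB, hB]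
  omega

end Cut

theorem stmt_7_general (ν : ℕ) (Ψ : Finset (Equiv.Perm (Fin ν)))
    (hΨ : 2 ≤ Ψ.card)
    (E : Finset (Fin (2 * ν)))
    (hsplit : SplitsAcross (rvbPoly ν Ψ) E) :
    (∀ σ ∈ Ψ, MapsCut ν σ E) ∧ Even E.card ∧ Even Eᶜ.card := by
  have key := fun σ (hσ : σ ∈ Ψ) ↦ siteA_mem_iff_siteB_mem_of_splitsAcross hsplit hσ
  obtain ⟨σ, hσ⟩ : Ψ.Nonempty := card_pos.1 (by omega)
  have hE : Even #E := ⟨_, (card_eq_two_mul_of_forall_mem_iff (key σ hσ)).trans (two_mul _)⟩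
  refine ⟨fun τ hτ ↦ mapsCut_of_forall_mem_iff (key τ hτ), hE, ?_⟩
  rw [card_compl, Fintype.card_fin, Nat.even_sub ((card_le_univ E).trans_eq (Fintype.card_fin _))]
  exact iff_of_true (even_two_mul ν) hE

/-- Theorem 3.1(ii)(b): if `F_Ψ` splits across a nontrivial
bipartition `(E,E')`, then `ψ(E∩A) = E∩B` for every `ψ ∈ Ψ` (i.e. `Ψ` is
decomposable via `E`), and `#E`, `#E'` are both even. -/
theorem stmt_7 (ν : ℕ) (hν : 2 ≤ ν) (Ψ : Finset (Equiv.Perm (Fin ν)))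
    (hΨ : 2 ≤ Ψ.card)
    (E : Finset (Fin (2 * ν))) (hE : E.Nonempty) (hE' : E ≠ Finset.univ)
    (hsplit : SplitsAcross (rvbPoly ν Ψ) E) :
    (∀ σ ∈ Ψ, MapsCut ν σ E) ∧ Even E.card ∧ Even Eᶜ.card :=
  stmt_7_general ν Ψ hΨ E hsplit
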